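/- Let L be a finite-dimensional monolithic Lie algebra over a field F. Then L is a strongly solvable A-algebra if and only if L is metabelian and there exists a subalgebra B of L with [L, L] ∩ B = 0 and [L, L] + B = L such that [[L, L], b] = [L, L] for every nonzero b ∈ B (equivalently, ad b acts invertibly on [L, L] for every nonzero b ∈ B). -/

import Mathlib

/-!
If `[L, L]` is abelian and `L = [L, L] + B` with every nonzero `b ∈ B` acting invertibly on
`[L, L]`, then an element `u ∉ [L, L]` acts on `[L, L]` as its nonzero `B`-component does, hence
injectively; since `ad u` is nilpotent on any nilpotent subalgebra `U ∋ u` and `[U, U] ⊆ [L, L]`,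
such a `U` is abelian.

Conversely, `[L, L]` is a nilpotent subalgebra, hence abelian. For each `b`, both
`[L, L] ∩ ker (ad b)` and `ad b ([L, L])` are ideals. If both were nonzero, the monolith would lie
in both, giving `m ∈ [L, L]` with `[b, m] ≠ 0` and `[b, [b, m]] = 0`; but then
`F b + ([L, L] ∩ ker (ad b)²)` is a nilpotent subalgebra of class two which is not abelian. So
every `ad b` is zero or invertible on `[L, L]`. Some `b₀` acts invertibly (otherwise `L` is
nilpotent, hence abelian), and its centralizer `B` is a complement of `[L, L]`. A nonzero `b ∈ B`
acting trivially on `[L, L]` would be central, forcing the monolith into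
`[L, L] ∩ ker (ad b₀) = 0`.
-/

/-- A finite-dimensional Lie algebra is an `A`-algebra if every nilpotent
subalgebra is abelian. -/
def IsAAlgebra (F L : Type*) [Field F] [LieRing L] [LieAlgebra F L] : Prop :=
  ∀ U : LieSubalgebra F L, LieRing.IsNilpotent U → IsLieAbelian U

open LieAlgebra

theorem Submodule.map_eq_self_iff_disjoint_ker {K V : Type*} [Field K] [AddCommGroup V]
    [Module K V] {f : V →ₗ[K] V} {p : Submodule K V} [FiniteDimensional K p]
    (hf : ∀ x ∈ p, f x ∈ p) : p.map f = p ↔ Disjoint p (LinearMap.ker f) :=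
  calc p.map f = p ↔ p ≤ p.map f :=
        ⟨fun h ↦ h.ge, fun h ↦ le_antisymm (Submodule.map_le_iff_le_comap.mpr hf) h⟩
    _ ↔ Function.Surjective (f.restrict hf) := by
        rw [← LinearMap.range_eq_top, LinearMap.range_restrict, Submodule.comap_subtype_eq_top]
    _ ↔ Function.Injective (f.restrict hf) := LinearMap.injective_iff_surjective.symm
    _ ↔ Disjoint p (LinearMap.ker f) := LinearMap.injective_restrict_iff hf

theorem Module.End.eq_zero_of_pow_apply_eq_zero {R M : Type*} [Semiring R] [AddCommMonoid M]
    [Module R M] {f : Module.End R M} {p : Submodule R M} (hf : ∀ x ∈ p, f x ∈ p)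
    (hinj : ∀ x ∈ p, f x = 0 → x = 0) {n : ℕ} {x : M} (hx : x ∈ p) (h : (f ^ n) x = 0) :
    x = 0 := by
  induction n generalizing x with
  | zero => simpa using h
  | succ n ih =>
    rw [pow_succ, Module.End.mul_apply] at h
    exact hinj x hx (ih (hf x hx) h)

theorem LieRing.isNilpotent_of_forall_lie_lie_eq_zero {L : Type*} [LieRing L]
    (h : ∀ x y z : L, ⁅x, ⁅y, z⁆⁆ = 0) : LieRing.IsNilpotent L := by
  have hcentral : LieModule.lowerCentralSeries ℤ L L 1 ≤ LieModule.maxTrivSubmodule ℤ L L := by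
    rw [LieModule.lowerCentralSeries_succ, LieModule.lowerCentralSeries_zero,
      LieSubmodule.lie_le_iff]
    exact fun x _ y _ ↦ (LieModule.mem_maxTrivSubmodule ℤ L L _).mpr fun z ↦ h z x y
  refine LieModule.IsNilpotent.mk (R := ℤ) (L := L) (M := L) (k := 2) ?_
  rw [LieModule.lowerCentralSeries_succ, LieSubmodule.lie_eq_bot_iff]
  exact fun x _ m hm ↦ (LieModule.mem_maxTrivSubmodule ℤ L L m).mp (hcentral hm) x

namespace LieAlgebra

section CommRing

variable {R L : Type*} [CommRing R] [LieRing L] [LieAlgebra R L]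

theorem lie_mem_derivedSeries_one (x y : L) : ⁅x, y⁆ ∈ derivedSeries R L 1 := by
  rw [derivedSeries_def, derivedSeriesOfIdeal_succ, derivedSeriesOfIdeal_zero]
  exact LieSubmodule.lie_mem_lie (LieSubmodule.mem_top x) (LieSubmodule.mem_top y)

theorem derivedSeries_one_eq_bot_iff : derivedSeries R L 1 = ⊥ ↔ ∀ x y : L, ⁅x, y⁆ = 0 := by
  rw [derivedSeries_def, derivedSeriesOfIdeal_succ, derivedSeriesOfIdeal_zero,
    LieSubmodule.lie_eq_bot_iff]
  simp

theorem derivedSeries_two_eq_bot_iff :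
    derivedSeries R L 2 = ⊥ ↔
      ∀ x ∈ derivedSeries R L 1, ∀ y ∈ derivedSeries R L 1, ⁅x, y⁆ = 0 := by
  rw [derivedSeries_def, derivedSeriesOfIdeal_succ]
  exact LieSubmodule.lie_eq_bot_iff _ _

theorem lie_lie_comm_of_derivedSeries_two_eq_bot (h : derivedSeries R L 2 = ⊥) (x y : L)
    {m : L} (hm : m ∈ derivedSeries R L 1) : ⁅x, ⁅y, m⁆⁆ = ⁅y, ⁅x, m⁆⁆ := by
  rw [leibniz_lie, derivedSeries_two_eq_bot_iff.mp h _ (lie_mem_derivedSeries_one x y) _ hm,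
    zero_add]

def derivedSeriesOneInfKerAd (h : derivedSeries R L 2 = ⊥) (b : L) : LieIdeal R L where
  toSubmodule := (derivedSeries R L 1).toSubmodule ⊓ LinearMap.ker (ad R L b)
  lie_mem {x m} hm := by
    refine ⟨lie_mem_derivedSeries_one x m, ?_⟩
    change ⁅b, ⁅x, m⁆⁆ = 0
    rw [lie_lie_comm_of_derivedSeries_two_eq_bot h b x hm.1]
    rw [show ⁅b, m⁆ = 0 from hm.2, lie_zero]

def derivedSeriesOneMapAd (h : derivedSeries R L 2 = ⊥) (b : L) : LieIdeal R L where
  toSubmodule := (derivedSeries R L 1).toSubmodule.map (ad R L b)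
  lie_mem := by
    rintro x _ ⟨m, hm, rfl⟩
    exact ⟨⁅x, m⁆, lie_mem_derivedSeries_one x m,
      lie_lie_comm_of_derivedSeries_two_eq_bot h b x hm⟩

def _root_.LieSubalgebra.kerAd (b : L) : LieSubalgebra R L where
  toSubmodule := LinearMap.ker (ad R L b)
  lie_mem' {x y} hx hy := by
    change ⁅b, ⁅x, y⁆⁆ = 0
    rw [leibniz_lie, show ⁅b, x⁆ = 0 from hx, show ⁅b, y⁆ = 0 from hy, zero_lie, lie_zero,
      add_zero]

theorem mem_center_of_sup_eq_top {B : LieSubalgebra R L}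
    (hinf : (derivedSeries R L 1).toSubmodule ⊓ B.toSubmodule = ⊥)
    (hsup : (derivedSeries R L 1).toSubmodule ⊔ B.toSubmodule = ⊤) {b : L} (hb : b ∈ B)
    (hbD : (derivedSeries R L 1).toSubmodule.map (ad R L b) = ⊥) : b ∈ center R L := by
  rw [LieModule.mem_maxTrivSubmodule]
  intro x
  obtain ⟨a, ha, c, hc, rfl⟩ := Submodule.mem_sup.mp (hsup ▸ Submodule.mem_top : x ∈ _)
  have hba : ⁅b, a⁆ = 0 := LinearMap.le_ker_iff_map.mpr hbD ha
  have hcb : ⁅c, b⁆ ∈ (derivedSeries R L 1).toSubmodule ⊓ B.toSubmodule :=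
    ⟨lie_mem_derivedSeries_one c b, B.lie_mem hc hb⟩
  rw [hinf] at hcb
  rw [add_lie, ← lie_skew, hba, neg_zero, zero_add]
  exact hcb

def derivedSeriesOneInfKerAdSq (h : derivedSeries R L 2 = ⊥) (b : L) : LieSubalgebra R L where
  toSubmodule := (derivedSeries R L 1).toSubmodule ⊓ LinearMap.ker (ad R L b ^ 2)
  lie_mem' {y z} hy hz := by
    rw [derivedSeries_two_eq_bot_iff.mp h y hy.1 z hz.1]
    exact Submodule.zero_mem _

theorem mem_derivedSeriesOneInfKerAdSq (h : derivedSeries R L 2 = ⊥) (b y : L) :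
    y ∈ derivedSeriesOneInfKerAdSq h b ↔ y ∈ derivedSeries R L 1 ∧ ⁅b, ⁅b, y⁆⁆ = 0 :=
  and_congr Iff.rfl (by rw [SetLike.mem_coe, LinearMap.mem_ker, pow_two, Module.End.mul_apply,
    ad_apply, ad_apply])

def spanSingletonSupKerAdSq (h : derivedSeries R L 2 = ⊥) (b : L) : LieSubalgebra R L where
  toSubmodule := (R ∙ b) ⊔ (derivedSeriesOneInfKerAdSq h b).toSubmodule
  lie_mem' := LieSubalgebra.lie_mem_sup_of_mem_normalizer <|
    (LieSubalgebra.mem_normalizer_iff _ b).mpr fun y hy ↦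
      have hy := (mem_derivedSeriesOneInfKerAdSq h b y).mp hy
      (mem_derivedSeriesOneInfKerAdSq h b _).mpr
        ⟨lie_mem_derivedSeries_one b y, by rw [hy.2, lie_zero]⟩

theorem self_mem_spanSingletonSupKerAdSq (h : derivedSeries R L 2 = ⊥) (b : L) :
    b ∈ spanSingletonSupKerAdSq h b :=
  Submodule.mem_sup_left (Submodule.mem_span_singleton_self b)

theorem isNilpotent_spanSingletonSupKerAdSq (h : derivedSeries R L 2 = ⊥) (b : L) :
    LieRing.IsNilpotent (spanSingletonSupKerAdSq h b) := by
  have hab := derivedSeries_two_eq_bot_iff.mp h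
  have hdecomp : ∀ u ∈ spanSingletonSupKerAdSq h b,
      ∃ c : R, ∃ y ∈ derivedSeries R L 1, ⁅b, ⁅b, y⁆⁆ = 0 ∧ c • b + y = u := by
    intro u hu
    obtain ⟨_, hcb, y, hy, rfl⟩ := Submodule.mem_sup.mp hu
    obtain ⟨c, rfl⟩ := Submodule.mem_span_singleton.mp hcb
    obtain ⟨hyD, hby⟩ := (mem_derivedSeriesOneInfKerAdSq h b y).mp hy
    exact ⟨c, y, hyD, hby, rfl⟩
  have hbU : ∀ u ∈ spanSingletonSupKerAdSq h b,
      ⁅b, u⁆ ∈ derivedSeries R L 1 ∧ ⁅b, ⁅b, u⁆⁆ = 0 := by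
    intro u hu
    obtain ⟨c, y, -, hby, rfl⟩ := hdecomp u hu
    rw [lie_add, lie_smul, lie_self, smul_zero, zero_add]
    exact ⟨lie_mem_derivedSeries_one b y, hby⟩
  have hUK : ∀ u ∈ spanSingletonSupKerAdSq h b, ∀ k ∈ derivedSeries R L 1,
      ⁅b, k⁆ = 0 → ⁅u, k⁆ = 0 := by
    intro u hu k hk hbk
    obtain ⟨c, y, hyD, -, rfl⟩ := hdecomp u hu
    rw [add_lie, smul_lie, hbk, smul_zero, hab y hyD k hk, add_zero]
  have hUU : ∀ v ∈ spanSingletonSupKerAdSq h b, ∀ z ∈ spanSingletonSupKerAdSq h b,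
      ⁅b, ⁅v, z⁆⁆ = 0 := by
    intro v hv z hz
    rw [leibniz_lie, ← lie_skew, hUK z hz _ (hbU v hv).1 (hbU v hv).2,
      hUK v hv _ (hbU z hz).1 (hbU z hz).2, neg_zero, zero_add]
  exact LieRing.isNilpotent_of_forall_lie_lie_eq_zero fun ⟨u, hu⟩ ⟨v, hv⟩ ⟨z, hz⟩ ↦
    Subtype.ext (hUK u hu _ (lie_mem_derivedSeries_one v z) (hUU v hv z hz))

end CommRing

end LieAlgebra

namespace IsAAlgebra

variable {F L : Type*} [Field F] [LieRing L] [LieAlgebra F L]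

theorem lie_eq_zero (hA : IsAAlgebra F L) {U : LieSubalgebra F L} (hU : LieRing.IsNilpotent U)
    {x y : L} (hx : x ∈ U) (hy : y ∈ U) : ⁅x, y⁆ = 0 :=
  haveI := hA U hU
  congrArg Subtype.val (trivial_lie_zero U U ⟨x, hx⟩ ⟨y, hy⟩)

theorem derivedSeries_two_eq_bot (hA : IsAAlgebra F L)
    (hD : LieRing.IsNilpotent (derivedSeries F L 1)) : derivedSeries F L 2 = ⊥ :=
  (abelian_iff_derived_succ_eq_bot ⊤ 1).mp
    (hA ((derivedSeries F L 1 : LieIdeal F L) : LieSubalgebra F L) hD)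

theorem exists_map_ad_ne_bot (hA : IsAAlgebra F L) (hD : derivedSeries F L 1 ≠ ⊥) :
    ∃ b : L, (derivedSeries F L 1).toSubmodule.map (ad F L b) ≠ ⊥ := by
  by_contra! hcentral
  have : LieRing.IsNilpotent L := LieRing.isNilpotent_of_forall_lie_lie_eq_zero fun x y z ↦
    LinearMap.le_ker_iff_map.mpr (hcentral x) (lie_mem_derivedSeries_one y z)
  exact hD (derivedSeries_one_eq_bot_iff.mpr fun x y ↦
    hA.lie_eq_zero (U := ⊤) inferInstance (LieSubalgebra.mem_top x) (LieSubalgebra.mem_top y))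

theorem lie_eq_zero_of_lie_lie_eq_zero (hA : IsAAlgebra F L) (h : derivedSeries F L 2 = ⊥)
    {b m : L} (hm : m ∈ derivedSeries F L 1) (hbm : ⁅b, ⁅b, m⁆⁆ = 0) : ⁅b, m⁆ = 0 :=
  hA.lie_eq_zero (isNilpotent_spanSingletonSupKerAdSq h b) (self_mem_spanSingletonSupKerAdSq h b)
    (Submodule.mem_sup_right ((mem_derivedSeriesOneInfKerAdSq h b m).mpr ⟨hm, hbm⟩))

variable [FiniteDimensional F L]

theorem map_ad_eq_bot_or_eq_self (hA : IsAAlgebra F L) (h : derivedSeries F L 2 = ⊥)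
    {W : LieIdeal F L} (hW : W ≠ ⊥) (hWmin : ∀ I : LieIdeal F L, I ≠ ⊥ → W ≤ I) (b : L) :
    (derivedSeries F L 1).toSubmodule.map (ad F L b) = ⊥ ∨
      (derivedSeries F L 1).toSubmodule.map (ad F L b) = (derivedSeries F L 1).toSubmodule := by
  by_cases himage : derivedSeriesOneMapAd h b = ⊥
  · exact Or.inl ((LieSubmodule.toSubmodule_eq_bot _).mpr himage)
  by_cases hker : derivedSeriesOneInfKerAd h b = ⊥
  · right
    rw [Submodule.map_eq_self_iff_disjoint_ker fun m _ ↦ lie_mem_derivedSeries_one b m,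
      disjoint_iff]
    exact (LieSubmodule.toSubmodule_eq_bot _).mpr hker
  obtain ⟨w, hwW, hw0⟩ : ∃ w ∈ W, w ≠ 0 := by
    by_contra! hzero
    exact hW ((LieSubmodule.eq_bot_iff W).mpr hzero)
  obtain ⟨m, hm, rfl⟩ := hWmin _ himage hwW
  exact absurd (hA.lie_eq_zero_of_lie_lie_eq_zero h hm (hWmin _ hker hwW).2) hw0

theorem exists_complement (hA : IsAAlgebra F L) (h : derivedSeries F L 2 = ⊥)
    {W : LieIdeal F L} (hW : W ≠ ⊥) (hWmin : ∀ I : LieIdeal F L, I ≠ ⊥ → W ≤ I) :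
    ∃ B : LieSubalgebra F L,
      (derivedSeries F L 1).toSubmodule ⊓ B.toSubmodule = ⊥ ∧
      (derivedSeries F L 1).toSubmodule ⊔ B.toSubmodule = ⊤ ∧
      ∀ b ∈ B, b ≠ 0 →
        (derivedSeries F L 1).toSubmodule.map (ad F L b) = (derivedSeries F L 1).toSubmodule := by
  by_cases hD : derivedSeries F L 1 = ⊥
  · exact ⟨⊤, by rw [hD]; simp, by rw [hD]; simp, fun b _ _ ↦ by rw [hD]; simp⟩
  obtain ⟨b₀, hb₀⟩ := hA.exists_map_ad_ne_bot hD
  have hb₀D := (hA.map_ad_eq_bot_or_eq_self h hW hWmin b₀).resolve_left hb₀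
  have hinf : (derivedSeries F L 1).toSubmodule ⊓ (LieSubalgebra.kerAd b₀).toSubmodule = ⊥ :=
    disjoint_iff.mp ((Submodule.map_eq_self_iff_disjoint_ker
      fun m _ ↦ lie_mem_derivedSeries_one b₀ m).mp hb₀D)
  have hsup : (derivedSeries F L 1).toSubmodule ⊔ (LieSubalgebra.kerAd b₀).toSubmodule = ⊤ := by
    change _ ⊔ LinearMap.ker (ad F L b₀) = ⊤
    rw [← Submodule.comap_map_eq, hb₀D, eq_top_iff]
    exact fun x _ ↦ lie_mem_derivedSeries_one b₀ x
  refine ⟨LieSubalgebra.kerAd b₀, hinf, hsup, fun b hb hb0 ↦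
    (hA.map_ad_eq_bot_or_eq_self h hW hWmin b).resolve_left fun hbD ↦ hW ?_⟩
  have hZ : center F L ≠ ⊥ := fun hZ ↦
    hb0 ((LieSubmodule.eq_bot_iff _).mp hZ b (mem_center_of_sup_eq_top hinf hsup hb hbD))
  rw [← LieSubmodule.toSubmodule_eq_bot, eq_bot_iff, ← hinf]
  intro w hw
  exact ⟨hWmin _ hD hw, (LieModule.mem_maxTrivSubmodule F L L w).mp (hWmin _ hZ hw) b₀⟩

end IsAAlgebra

theorem isAAlgebra_of_sup_eq_top {F L : Type*} [Field F] [LieRing L] [LieAlgebra F L]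
    [FiniteDimensional F L] (h : derivedSeries F L 2 = ⊥) {B : LieSubalgebra F L}
    (hsup : (derivedSeries F L 1).toSubmodule ⊔ B.toSubmodule = ⊤)
    (hB : ∀ b ∈ B, b ≠ 0 →
      (derivedSeries F L 1).toSubmodule.map (ad F L b) = (derivedSeries F L 1).toSubmodule) :
    IsAAlgebra F L := by
  have hab := derivedSeries_two_eq_bot_iff.mp h
  have hmaps : ∀ u : L, ∀ m ∈ (derivedSeries F L 1).toSubmodule,
      ad F L u m ∈ derivedSeries F L 1 :=
    fun u m _ ↦ lie_mem_derivedSeries_one u m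
  intro U hU
  obtain ⟨n, hn⟩ := LieAlgebra.nilpotent_ad_of_nilpotent_algebra F U
  refine ⟨fun x y ↦ Subtype.ext ?_⟩
  change ⁅(x : L), (y : L)⁆ = 0
  by_cases hUD : ∀ u ∈ U, u ∈ derivedSeries F L 1
  · exact hab _ (hUD x x.2) _ (hUD y y.2)
  push Not at hUD
  obtain ⟨u, huU, huD⟩ := hUD
  obtain ⟨a, ha, b, hb, rfl⟩ := Submodule.mem_sup.mp (hsup ▸ Submodule.mem_top : u ∈ _)
  have hb0 : b ≠ 0 := by
    rintro rfl
    exact huD (by simpa using ha)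
  have hinj : ∀ m ∈ (derivedSeries F L 1).toSubmodule, ad F L (a + b) m = 0 → m = 0 := by
    intro m hm hm0
    rw [ad_apply, add_lie, hab a ha m hm, zero_add] at hm0
    exact Submodule.disjoint_def.mp ((Submodule.map_eq_self_iff_disjoint_ker (hmaps b)).mp
      (hB b hb hb0)) m hm hm0
  refine Module.End.eq_zero_of_pow_apply_eq_zero (hmaps _) hinj (n := n)
    (lie_mem_derivedSeries_one (x : L) y) ?_
  rw [← LieSubalgebra.coe_bracket, ← LieSubalgebra.coe_ad_pow F L U ⟨a + b, huU⟩ ⁅x, y⁆ n, hn]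
  rfl

theorem monolithic_strongly_solvable_A_iff (F L : Type*) [Field F] [LieRing L] [LieAlgebra F L]
    [FiniteDimensional F L]
    (W : LieIdeal F L) (hWne : W ≠ ⊥)
    (hWmono : ∀ I : LieIdeal F L, I ≠ ⊥ → W ≤ I) :
    (LieRing.IsNilpotent (LieAlgebra.derivedSeries F L 1) ∧ IsAAlgebra F L) ↔
      (LieAlgebra.derivedSeries F L 2 = ⊥ ∧
        ∃ B : LieSubalgebra F L,
          (LieAlgebra.derivedSeries F L 1).toSubmodule ⊓ B.toSubmodule = ⊥ ∧
          (LieAlgebra.derivedSeries F L 1).toSubmodule ⊔ B.toSubmodule = ⊤ ∧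
          ∀ b ∈ B, b ≠ 0 →
            Submodule.map (LieAlgebra.ad F L b)
                (LieAlgebra.derivedSeries F L 1).toSubmodule =
              (LieAlgebra.derivedSeries F L 1).toSubmodule) := by
  constructor
  · rintro ⟨hD, hA⟩
    have h2 := hA.derivedSeries_two_eq_bot hD
    exact ⟨h2, hA.exists_complement h2 hWne hWmono⟩
  · rintro ⟨h2, B, -, hsup, hB⟩
    have : IsLieAbelian (derivedSeries F L 1) := (abelian_iff_derived_succ_eq_bot ⊤ 1).mpr h2
    exact ⟨inferInstance, isAAlgebra_of_sup_eq_top h2 hsup hB⟩
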